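/- Let V and W be left H-modules, and define τ_{V,W} : Hom_k(H, V⊗W) → Hom_k(H, W⊗V) by τ_{V,W}(φ)(h) = (id_W ⊗ (h⁽²⁾·)) (σ_{V,W}(φ(h⁽¹⁾))); explicitly, if φ(h⁽¹⁾) = Σ v ⊗ w then τ_{V,W}(φ)(h) = Σ w ⊗ h⁽²⁾·v. Then for every φ ∈ Hom_k(H, V⊗W), (τ_{W,V} ∘ τ_{V,W})(φ) = (h ↦ h⁽²⁾·φ(h⁽¹⁾)), where H acts diagonally on V ⊗ W. -/

import Mathlib

/-!
# Statement 18

`k` a field, `H` a Hopf algebra over `k`, `V, W` left `H`-modules.  Define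
`τ_{V,W} : Hom_k(H, V ⊗ W) → Hom_k(H, W ⊗ V)` by
`τ_{V,W}(φ)(h) = (id_W ⊗ (h⁽²⁾·)) (σ_{V,W} (φ(h⁽¹⁾)))`, i.e. if `φ(h⁽¹⁾) = Σ v ⊗ w` then
`τ_{V,W}(φ)(h) = Σ w ⊗ h⁽²⁾·v`.  Then for every `φ`,
`(τ_{W,V} ∘ τ_{V,W})(φ) = (h ↦ h⁽²⁾ · φ(h⁽¹⁾))`, with the diagonal `H`-action on `V ⊗ W`.
-/

open TensorProduct

noncomputable section

variable (k : Type) [Field k]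

/-- The curried action of a `k`-algebra `R` on a module `V`, as a `k`-bilinear map. -/
def csmul (R : Type) [Ring R] [Algebra k R] (V : Type) [AddCommGroup V] [Module k V]
    [Module R V] [IsScalarTower k R V] [SMulCommClass k R V] : R →ₗ[k] V →ₗ[k] V where
  toFun r :=
    { toFun := fun v => r • v
      map_add' := smul_add r
      map_smul' := fun c v => (smul_comm c r v).symm }
  map_add' r r' := LinearMap.ext fun v => add_smul r r' v
  map_smul' c r := LinearMap.ext fun v => smul_assoc c r v

variable (H : Type) [Ring H] [HopfAlgebra k H]
variable (V W : Type)
  [AddCommGroup V] [Module k V] [Module H V] [IsScalarTower k H V] [SMulCommClass k H V]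
  [AddCommGroup W] [Module k W] [Module H W] [IsScalarTower k H W] [SMulCommClass k H W]

/-- `τ_{V,W}(φ)(h) = Σ w ⊗ h⁽²⁾ · v` where `φ(h⁽¹⁾) = Σ v ⊗ w`. -/
def tau (φ : H →ₗ[k] V ⊗[k] W) : H →ₗ[k] W ⊗[k] V :=
  (LinearMap.lTensor W
      ((TensorProduct.lift (csmul k H V)) ∘ₗ (TensorProduct.comm k V H).toLinearMap)) ∘ₗ
    (TensorProduct.assoc k W V H).toLinearMap ∘ₗ
    (LinearMap.rTensor H ((TensorProduct.comm k V W).toLinearMap ∘ₗ φ)) ∘ₗ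
    (Coalgebra.comul (R := k))

/-- The diagonal action `H ⊗ (V ⊗ W) →ₗ V ⊗ W`, `h ⊗ (v ⊗ w) ↦ h⁽¹⁾ v ⊗ h⁽²⁾ w`. -/
def diagAct : H ⊗[k] (V ⊗[k] W) →ₗ[k] V ⊗[k] W :=
  (TensorProduct.map (TensorProduct.lift (csmul k H V)) (TensorProduct.lift (csmul k H W))) ∘ₗ
    (TensorProduct.tensorTensorTensorComm k H H V W).toLinearMap ∘ₗ
    (LinearMap.rTensor (V ⊗[k] W) (Coalgebra.comul (R := k)))

/-!
Write `τ_{V,W}(φ) = t(φ) ∘ Δ`, where `t(ψ)(a ⊗ r)` flips `ψ(a)` and lets `r` act on the factor that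
moved to the right. Applying `t` twice gives `(a ⊗ b) ⊗ c ↦ (b ⊗ c) · ψ(a)`, so the left-hand side is
`a ⊗ (b ⊗ c) ↦ (b ⊗ c) · φ(a)` composed with `assoc ∘ (Δ ⊗ id) ∘ Δ`, while the right-hand side is the
same map composed with `(id ⊗ Δ) ∘ Δ`. Coassociativity identifies the two.
-/

section Twist

variable {k}
variable (R : Type) [Ring R] [Algebra k R]
variable {A B M N : Type} [AddCommGroup A] [Module k A] [AddCommGroup B] [Module k B]
  [AddCommGroup M] [Module k M] [Module R M] [IsScalarTower k R M] [SMulCommClass k R M]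
  [AddCommGroup N] [Module k N]

/-- `twist R ψ (a ⊗ r) = Σ n ⊗ r • m` where `ψ a = Σ m ⊗ n`. -/
def twist (ψ : A →ₗ[k] M ⊗[k] N) : A ⊗[k] R →ₗ[k] N ⊗[k] M :=
  LinearMap.lTensor N (lift (csmul k R M) ∘ₗ (TensorProduct.comm k M R).toLinearMap) ∘ₗ
    (TensorProduct.assoc k N M R).toLinearMap ∘ₗ
    LinearMap.rTensor R ((TensorProduct.comm k M N).toLinearMap ∘ₗ ψ)

lemma twist_comp (ψ : A →ₗ[k] M ⊗[k] N) (f : B →ₗ[k] A) :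
    twist R (ψ ∘ₗ f) = twist R ψ ∘ₗ f.rTensor R := by
  simp only [twist, LinearMap.comp_assoc, ← LinearMap.rTensor_comp]

variable [Module R N] [IsScalarTower k R N] [SMulCommClass k R N]

/-- The action `(r ⊗ s) ⊗ (m ⊗ n) ↦ r • m ⊗ s • n` of `R ⊗ R` on `M ⊗ N`. -/
def tensorAction : (R ⊗[k] R) ⊗[k] (M ⊗[k] N) →ₗ[k] M ⊗[k] N :=
  map (lift (csmul k R M)) (lift (csmul k R N)) ∘ₗ
    (tensorTensorTensorComm k R R M N).toLinearMap

lemma twist_twist (ψ : A →ₗ[k] M ⊗[k] N) :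
    twist R (twist R ψ) =
      tensorAction R ∘ₗ (TensorProduct.comm k (M ⊗[k] N) (R ⊗[k] R)).toLinearMap ∘ₗ
        ψ.rTensor (R ⊗[k] R) ∘ₗ (TensorProduct.assoc k A R R).toLinearMap := by
  refine TensorProduct.ext_threefold fun a r s => ?_
  simp only [twist, tensorAction, LinearMap.coe_comp, Function.comp_apply, LinearEquiv.coe_coe,
    TensorProduct.assoc_tmul, LinearMap.rTensor_tmul, TensorProduct.comm_tmul]
  induction ψ a using TensorProduct.induction_on with
  | zero => simp
  | tmul m n => simp [csmul]
  | add x y hx hy => simp [add_tmul, tmul_add, hx, hy]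

end Twist

lemma tau_eq_twist_comp_comul {M N : Type}
    [AddCommGroup M] [Module k M] [Module H M] [IsScalarTower k H M] [SMulCommClass k H M]
    [AddCommGroup N] [Module k N] (φ : H →ₗ[k] M ⊗[k] N) :
    tau k H M N φ = twist H φ ∘ₗ Coalgebra.comul := rfl

lemma diagAct_eq_tensorAction_comp_rTensor_comul :
    diagAct k H V W = tensorAction H ∘ₗ Coalgebra.comul.rTensor (V ⊗[k] W) := rfl

theorem stmt18 (φ : H →ₗ[k] V ⊗[k] W) :
    tau k H W V (tau k H V W φ) =
      (diagAct k H V W) ∘ₗ (TensorProduct.comm k (V ⊗[k] W) H).toLinearMap ∘ₗ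
        (LinearMap.rTensor H φ) ∘ₗ (Coalgebra.comul (R := k)) := by
  have comm_rTensor_lTensor_comul :
      (TensorProduct.comm k (V ⊗[k] W) (H ⊗[k] H)).toLinearMap ∘ₗ φ.rTensor (H ⊗[k] H) ∘ₗ
          Coalgebra.comul.lTensor H =
        Coalgebra.comul.rTensor (V ⊗[k] W) ∘ₗ
          (TensorProduct.comm k (V ⊗[k] W) H).toLinearMap ∘ₗ φ.rTensor H :=
    TensorProduct.ext' fun _ _ => rfl
  rw [tau_eq_twist_comp_comul, tau_eq_twist_comp_comul, twist_comp, twist_twist,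
    diagAct_eq_tensorAction_comp_rTensor_comul]
  simp only [LinearMap.comp_assoc]
  rw [Coalgebra.coassoc, ← LinearMap.comp_assoc _ (Coalgebra.comul.lTensor H),
    ← LinearMap.comp_assoc _ (φ.rTensor (H ⊗[k] H) ∘ₗ _), comm_rTensor_lTensor_comul]
  simp only [LinearMap.comp_assoc]

end
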